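/- Let μ be a probability mass function on a type γ, let S : γ → Finset α assign to each m a nonempty finite set, let f : α → β, and let S' be a nonempty finite subset of β. If for every m in the support of μ the function f evenly partitions S(m) into S', then the distribution obtained by first sampling m according to μ, then sampling x uniformly from S(m), and returning f(x), equals the uniform distribution on S'. (This justifies the paper's RSample rule for dynamic random choice, where the sampling set is itself random.) -/

import Mathlib

/-!
Conditioned on any `m` in the support of `μ`, the inner experiment is already uniform on `S'`:
if every fibre of `f` over `S'` meets `S m` in `k` points, then `#(S m) = k * #S'`, so each
`b ∈ S'` receives mass `k / #(S m) = 1 / #S'`. Mixing copies of the same distribution returns it.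
-/

open Finset

namespace PMF

variable {α β γ : Type*}

theorem bind_congr_of_mem_support (p : PMF α) {f g : α → PMF β}
    (h : ∀ a ∈ p.support, f a = g a) : p.bind f = p.bind g := by
  ext b
  simp only [bind_apply]
  refine tsum_congr fun a => ?_
  by_cases ha : a ∈ p.support
  · rw [h a ha]
  · rw [(apply_eq_zero_iff p a).mpr ha, zero_mul, zero_mul]

theorem map_uniformOfFinset_apply [DecidableEq β] (s : Finset α) (hs : s.Nonempty) (f : α → β)
    (b : β) : (uniformOfFinset s hs).map f b = #{a ∈ s | f a = b} / #s := by
  rw [← toOuterMeasure_apply_singleton, toOuterMeasure_map_apply,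
    toOuterMeasure_uniformOfFinset_apply]
  simp only [Set.mem_preimage, Set.mem_singleton_iff]

theorem map_uniformOfFinset_of_card_fiber_eq [DecidableEq β] (s : Finset α) (hs : s.Nonempty)
    (f : α → β) (t : Finset β) (ht : t.Nonempty) (himage : s.image f = t) (k : ℕ)
    (hfiber : ∀ b ∈ t, #{a ∈ s | f a = b} = k) :
    (uniformOfFinset s hs).map f = uniformOfFinset t ht := by
  have hcard : #s = #t * k := by
    rw [card_eq_sum_card_fiberwise fun a ha => himage ▸ mem_image_of_mem f ha,
      sum_congr rfl hfiber, sum_const, smul_eq_mul]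
  have hk : k ≠ 0 := by
    obtain ⟨a, ha⟩ := hs
    rw [← hfiber (f a) (himage ▸ mem_image_of_mem f ha)]
    exact (card_pos.mpr ⟨a, mem_filter.mpr ⟨ha, rfl⟩⟩ : 0 < #{a' ∈ s | f a' = f a}).ne'
  ext b
  rw [map_uniformOfFinset_apply, uniformOfFinset_apply]
  split_ifs with hb
  · rw [hfiber b hb, hcard, Nat.cast_mul, ENNReal.div_eq_inv_mul,
      ENNReal.mul_inv (by simp [ht.card_ne_zero]) (by simp), mul_assoc,
      ENNReal.inv_mul_cancel (by exact_mod_cast hk) (by simp), mul_one]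
  · have hempty : {a ∈ s | f a = b} = ∅ :=
      filter_eq_empty_iff.mpr fun a ha hab => hb (himage ▸ hab ▸ mem_image_of_mem f ha)
    rw [hempty, card_empty, Nat.cast_zero, ENNReal.zero_div]

end PMF

/-- Dynamic random choice: if for every `m` in the support of `μ` the function `f`
evenly partitions `S m` into the fixed set `S'`, then sampling `m ∼ μ`, then `x`
uniformly from `S m`, and returning `f x`, yields the uniform distribution on `S'`. -/
theorem rsample_dynamic {γ α β : Type*} [DecidableEq β]
    (μ : PMF γ) (S : γ → Finset α) (hne : ∀ m, (S m).Nonempty)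
    (f : α → β) (S' : Finset β) (hS' : S'.Nonempty)
    (hEI : ∀ m ∈ μ.support, (S m).image f = S' ∧
      ∃ k : ℕ, ∀ s' ∈ S', ((S m).filter (fun s => f s = s')).card = k) :
    (μ.bind fun m => (PMF.uniformOfFinset (S m) (hne m)).map f) =
      PMF.uniformOfFinset S' hS' := by
  rw [← PMF.bind_const μ (PMF.uniformOfFinset S' hS')]
  refine μ.bind_congr_of_mem_support fun m hm => ?_
  obtain ⟨himage, k, hfiber⟩ := hEI m hm
  exact PMF.map_uniformOfFinset_of_card_fiber_eq _ _ f S' hS' himage k hfiber
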